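/- arXiv:2301.00616 — 2 statements merged into one kernel-verified Lean document; each statement's English description precedes it below -/
import Mathlib

section
/- Let η : ℝⁿ → ℝ be a C¹ function with bounded partial derivatives, and for h ∈ ℝ define ψ_h : ℝⁿ → ℝⁿ by ψ_h(x) = (x₁,...,x_{n-1}, x_n - h·η(x)). If |h| < (2 · sup_x |∂_{x_n} η(x)|)^{-1} then ψ_h is a bijection from ℝⁿ to ℝⁿ. -/
/-- If `η : ℝⁿ → ℝ` is `C¹` with bounded derivative and
`|h| < (2 · sup_x |∂_{x_n} η(x)|)⁻¹`, then the shear map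
`ψ_h(x) = (x', x_n - h·η(x))` is a bijection of `ℝⁿ`. -/
theorem stmt_3 (n : ℕ) (hn : 2 ≤ n) (η : (Fin n → ℝ) → ℝ)
    (hη : ContDiff ℝ 1 η)
    (hbdd : ∃ M : ℝ, ∀ x, ‖fderiv ℝ η x‖ ≤ M)
    (S : ℝ)
    (hS : S = ⨆ x : Fin n → ℝ, |fderiv ℝ η x (Pi.single (⟨n - 1, by omega⟩ : Fin n) 1)|)
    (hSpos : 0 < S)
    (h : ℝ) (hh : |h| < (2 * S)⁻¹) :
    Function.Bijective (fun x : Fin n → ℝ =>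
      Function.update x (⟨n - 1, by omega⟩ : Fin n)
        (x (⟨n - 1, by omega⟩ : Fin n) - h * η x)) := by
  set i : Fin n := ⟨n - 1, by omega⟩ with hidef
  obtain ⟨M, hM⟩ := hbdd
  have hbdd' : BddAbove (Set.range fun x : Fin n → ℝ => |fderiv ℝ η x (Pi.single i 1)|) := by
    refine ⟨M, ?_⟩
    rintro _ ⟨x, rfl⟩
    calc |fderiv ℝ η x (Pi.single i 1)| = ‖fderiv ℝ η x (Pi.single i 1)‖ := rfl
      _ ≤ ‖fderiv ℝ η x‖ * ‖(Pi.single i 1 : Fin n → ℝ)‖ := (fderiv ℝ η x).le_opNorm _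
      _ ≤ M * 1 := by
          have h1 : ‖(Pi.single i 1 : Fin n → ℝ)‖ = 1 := by
            rw [Pi.norm_single]; simp
          rw [h1]
          exact mul_le_mul_of_nonneg_right (hM x) zero_le_one
      _ = M := mul_one M
  have hDS : ∀ x, |fderiv ℝ η x (Pi.single i 1)| ≤ S := by
    intro x; rw [hS]; exact le_ciSup hbdd' x
  -- Lipschitz bound in the i-th coordinate
  have hlip : ∀ y : Fin n → ℝ, ∀ a b : ℝ,
      dist (η (Function.update y i a)) (η (Function.update y i b)) ≤ S * dist a b := by
    intro y
    have hderiv : ∀ t : ℝ, HasDerivAt (fun t => η (Function.update y i t))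
        (fderiv ℝ η (Function.update y i t) (Pi.single i 1)) t := by
      intro t
      have hA : HasDerivAt (fun t : ℝ => Function.update y i t)
          (Pi.single i 1 : Fin n → ℝ) t := by
        have he : (fun t : ℝ => Function.update y i t)
            = fun t : ℝ => t • (Pi.single i 1 : Fin n → ℝ) + Function.update y i 0 := by
          funext t j
          by_cases hj : j = i
          · subst hj; simp
          · simp [Function.update_of_ne hj, Pi.single_eq_of_ne hj]
        rw [he]
        simpa using ((hasDerivAt_id t).smul_const (Pi.single i 1 : Fin n → ℝ)).add_const (Function.update y i 0)
      exact ((hη.differentiable one_ne_zero _).hasFDerivAt).comp_hasDerivAt t hA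
    have hlw : LipschitzWith S.toNNReal (fun t => η (Function.update y i t)) := by
      apply lipschitzWith_of_nnnorm_deriv_le (fun t => (hderiv t).differentiableAt)
      intro t
      rw [(hderiv t).deriv]
      rw [← NNReal.coe_le_coe, coe_nnnorm, Real.coe_toNNReal _ hSpos.le]
      exact hDS _
    intro a b
    have := hlw.dist_le_mul a b
    rwa [Real.coe_toNNReal _ hSpos.le] at this
  have hhS : |h| * S < 1 := by
    have : |h| * S < (2 * S)⁻¹ * S := mul_lt_mul_of_pos_right hh hSpos
    have h2 : (2 * S)⁻¹ * S = 1 / 2 := by field_simp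
    rw [h2] at this
    linarith
  constructor
  · -- injectivity
    intro x y hxy
    have hoff : ∀ j, j ≠ i → x j = y j := by
      intro j hj
      have := congrFun hxy j
      simpa [Function.update_of_ne hj] using this
    have hyx : y = Function.update x i (y i) := by
      funext j; by_cases hj : j = i
      · subst hj; simp
      · simp [Function.update_of_ne hj, hoff j hj]
    have hi' : x i - h * η x = y i - h * η y := by
      have := congrFun hxy i
      simpa using this
    have hxi : x i = y i := by
      by_contra hne
      have hd : 0 < dist (x i) (y i) := dist_pos.mpr hne
      have heq : x i - y i = h * (η x - η y) := by linarith
      have h1 : dist (x i) (y i) = |h| * dist (η x) (η y) := by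
        rw [Real.dist_eq, Real.dist_eq, heq, abs_mul]
      have h2 : dist (η x) (η y) ≤ S * dist (x i) (y i) := by
        have := hlip x (x i) (y i)
        rwa [Function.update_eq_self, ← hyx] at this
      nlinarith [mul_le_mul_of_nonneg_left h2 (abs_nonneg h), dist_nonneg (x := η x) (y := η y)]
    have : y = x := by rw [hyx, ← hxi, Function.update_eq_self]
    exact this.symm
  · -- surjectivity
    intro y
    set g : ℝ → ℝ := fun t => y i + h * η (Function.update y i t) with hg
    have hKlt : (⟨|h| * S, by positivity⟩ : NNReal) < 1 := by
      apply NNReal.coe_lt_coe.mp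
      exact_mod_cast hhS
    have hcontr : ContractingWith ⟨|h| * S, by positivity⟩ g := by
      refine ⟨hKlt, LipschitzWith.of_dist_le_mul ?_⟩
      intro a b
      have hgd : dist (g a) (g b) = |h| * dist (η (Function.update y i a)) (η (Function.update y i b)) := by
        simp only [hg, Real.dist_eq]
        rw [← abs_mul]
        ring_nf
      rw [hgd]
      calc |h| * dist (η (Function.update y i a)) (η (Function.update y i b))
          ≤ |h| * (S * dist a b) := mul_le_mul_of_nonneg_left (hlip y a b) (abs_nonneg h)
        _ = (⟨|h| * S, by positivity⟩ : NNReal) * dist a b := by push_cast; ring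
    set t₀ := ContractingWith.fixedPoint g hcontr with ht₀def
    have ht₀ : g t₀ = t₀ := hcontr.fixedPoint_isFixedPt
    refine ⟨Function.update y i t₀, ?_⟩
    simp only
    rw [Function.update_idem, Function.update_self]
    have : t₀ - h * η (Function.update y i t₀) = y i := by
      have := ht₀
      simp only [hg] at this
      linarith
    rw [this, Function.update_eq_self]
end

section
/- Let t > 1 and define exponents p_k = 2 t^k for k ≥ 0. Suppose nonnegative numbers M_k satisfy M_k ≤ (C p_{k-1}²)^{1/p_{k-1}} · |h|^{2/p_{k-1}} · M_{k-1}^{(p_{k-1}-2)/p_{k-1}} for all k ≥ 1, where C ≥ 1 and 0 < |h| ≤ 1, and M_0 ≤ C|h|. Then there exists a constant C' depending only on C and t (and not on k) such that M_k ≤ C'|h| for all k ≥ 0. -/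
/-- Arithmetic core of Moser's iteration: if `p_k = 2tᵏ`, `M_0 ≤ C|h|`, and
`M_k ≤ (C p_{k-1}²)^{1/p_{k-1}} |h|^{2/p_{k-1}} M_{k-1}^{(p_{k-1}-2)/p_{k-1}}`,
then `M_k ≤ C'|h|` uniformly in `k`. -/
theorem stmt_9 (t C h : ℝ) (ht : 1 < t) (hC : 1 ≤ C) (hh0 : 0 < |h|) (hh1 : |h| ≤ 1)
    (M : ℕ → ℝ) (hMnn : ∀ k, 0 ≤ M k)
    (hM0 : M 0 ≤ C * |h|)
    (hMiter : ∀ k : ℕ,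
      M (k + 1) ≤ (C * (2 * t ^ k) ^ 2) ^ (1 / (2 * t ^ k)) *
        |h| ^ (2 / (2 * t ^ k)) * M k ^ ((2 * t ^ k - 2) / (2 * t ^ k))) :
    ∃ C' : ℝ, 0 < C' ∧ ∀ k : ℕ, M k ≤ C' * |h| := by
  have ht0 : (0:ℝ) < t := by linarith
  have hC0 : (0:ℝ) < C := by linarith
  set a : ℕ → ℝ := fun k => (Real.log C + 2 * Real.log 2 + 2 * k * Real.log t) * (1 / (2 * t ^ k))
    with ha_def
  have hlogC : 0 ≤ Real.log C := Real.log_nonneg hC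
  have hlog2 : 0 ≤ Real.log 2 := Real.log_nonneg (by norm_num)
  have hlogt : 0 ≤ Real.log t := Real.log_nonneg ht.le
  have htk : ∀ k : ℕ, 0 < t ^ k := fun k => pow_pos ht0 k
  have ha_nonneg : ∀ k, 0 ≤ a k := by
    intro k
    apply mul_nonneg
    · positivity
    · positivity
  -- summability of a
  have hr : |1 / t| < 1 := by
    rw [abs_of_pos (by positivity)]
    rw [div_lt_one ht0]; linarith
  have hsum : Summable a := by
    have h1 : Summable (fun k : ℕ => (Real.log C + 2 * Real.log 2) * (1/2) * (1/t)^k) :=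
      (summable_geometric_of_lt_one (by positivity) (by rw [div_lt_one ht0]; linarith)).mul_left _
    have h2 : Summable (fun k : ℕ => Real.log t * (k * (1/t)^k)) := by
      have := summable_pow_mul_geometric_of_norm_lt_one 1 hr (R := ℝ)
      simpa [pow_one] using this.mul_left (Real.log t)
    have := h1.add h2
    refine this.congr fun k => ?_
    have : (1/t)^k = 1 / t^k := by rw [one_div, one_div, inv_pow]
    rw [ha_def]
    simp only [this]
    field_simp
  set S := ∑' k, a k with hS
  refine ⟨C * Real.exp S, by positivity, ?_⟩
  have key : ∀ k : ℕ, M k ≤ C * Real.exp (∑ j ∈ Finset.range k, a j) * |h| := by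
    intro k
    induction k with
    | zero => simpa using hM0
    | succ k ih =>
      set E := C * Real.exp (∑ j ∈ Finset.range k, a j) with hE
      have hE1 : 1 ≤ E := by
        rw [hE]
        have h1 : 1 ≤ Real.exp (∑ j ∈ Finset.range k, a j) :=
          Real.one_le_exp (Finset.sum_nonneg fun i _ => ha_nonneg i)
        nlinarith
      have hE0 : (0:ℝ) < E := by linarith
      have hp : (0:ℝ) < 2 * t ^ k := by positivity
      have hθnn : 0 ≤ (2 * t ^ k - 2) / (2 * t ^ k) := by
        apply div_nonneg _ hp.le
        nlinarith [one_le_pow₀ ht.le (n := k)]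
      have hθle : (2 * t ^ k - 2) / (2 * t ^ k) ≤ 1 := by
        rw [div_le_one hp]; linarith
      -- base = exp (a k)
      have hbase : (C * (2 * t ^ k) ^ 2) ^ (1 / (2 * t ^ k)) = Real.exp (a k) := by
        rw [Real.rpow_def_of_pos (by positivity)]
        congr 1
        rw [ha_def]
        have h1 : Real.log (C * (2 * t ^ k) ^ 2)
            = Real.log C + 2 * (Real.log 2 + k * Real.log t) := by
          rw [Real.log_mul (by positivity) (by positivity), Real.log_pow,
            Real.log_mul (by norm_num) (by positivity), Real.log_pow]
          push_cast; ring
        rw [h1]; ring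
      have step1 : M k ^ ((2 * t ^ k - 2) / (2 * t ^ k))
          ≤ E * |h| ^ ((2 * t ^ k - 2) / (2 * t ^ k)) := by
        calc M k ^ ((2 * t ^ k - 2) / (2 * t ^ k))
            ≤ (E * |h|) ^ ((2 * t ^ k - 2) / (2 * t ^ k)) :=
              Real.rpow_le_rpow (hMnn k) ih hθnn
          _ = E ^ ((2 * t ^ k - 2) / (2 * t ^ k)) * |h| ^ ((2 * t ^ k - 2) / (2 * t ^ k)) :=
              Real.mul_rpow hE0.le hh0.le
          _ ≤ E * |h| ^ ((2 * t ^ k - 2) / (2 * t ^ k)) := by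
              have : E ^ ((2 * t ^ k - 2) / (2 * t ^ k)) ≤ E ^ (1:ℝ) :=
                Real.rpow_le_rpow_of_exponent_le hE1 hθle
              rw [Real.rpow_one] at this
              exact mul_le_mul_of_nonneg_right this (Real.rpow_nonneg hh0.le _)
      have hhmul : |h| ^ (2 / (2 * t ^ k)) * |h| ^ ((2 * t ^ k - 2) / (2 * t ^ k)) = |h| := by
        rw [← Real.rpow_add hh0]
        have : 2 / (2 * t ^ k) + (2 * t ^ k - 2) / (2 * t ^ k) = 1 := by
          field_simp
          ring
        rw [this, Real.rpow_one]
      calc M (k + 1)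
          ≤ (C * (2 * t ^ k) ^ 2) ^ (1 / (2 * t ^ k)) *
              |h| ^ (2 / (2 * t ^ k)) * M k ^ ((2 * t ^ k - 2) / (2 * t ^ k)) := hMiter k
        _ ≤ Real.exp (a k) * |h| ^ (2 / (2 * t ^ k)) *
              (E * |h| ^ ((2 * t ^ k - 2) / (2 * t ^ k))) := by
            rw [hbase]
            exact mul_le_mul_of_nonneg_left step1
              (by positivity)
        _ = (E * Real.exp (a k)) *
              (|h| ^ (2 / (2 * t ^ k)) * |h| ^ ((2 * t ^ k - 2) / (2 * t ^ k))) := by ring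
        _ = C * Real.exp (∑ j ∈ Finset.range (k+1), a j) * |h| := by
            rw [hhmul, Finset.sum_range_succ, Real.exp_add, hE]; ring
  intro k
  refine (key k).trans ?_
  have hle : ∑ j ∈ Finset.range k, a j ≤ S :=
    Summable.sum_le_tsum (Finset.range k) (fun i _ => ha_nonneg i) hsum
  have := Real.exp_le_exp.mpr hle
  exact mul_le_mul_of_nonneg_right (mul_le_mul_of_nonneg_left this hC0.le) hh0.le
end
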